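/- Let Q be a reduced quantale, i.e., a quantale (with bottom element ⊥) such that a * a = ⊥ implies a = ⊥. Let D = {q ∈ Q : for all x ∈ Q, q * x = ⊥ implies x = ⊥}. Then: (1) D is a multiplicative filter of Q; (2) D is conormal over Q, i.e., whenever x ≼¹_D y there exists s ∈ D with s * x ≤ y; (3) for all x, y ∈ Q, (x ≼_D y and y ≼_D x) holds if and only if ħ(x) = ħ(y), where ħ(q) = ⨆ {q' ∈ Q : q * q' = ⊥}. -/
import Mathlib


universe u v

/-- A (commutative, integral) quantale: a complete lattice with a commutative monoid
structure whose unit is the top element and whose multiplication distributes over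
arbitrary suprema. -/
class IntegralQuantale (Q : Type u) extends CompleteLattice Q, CommMonoid Q where
  one_eq_top : (1 : Q) = ⊤
  mul_sSup : ∀ (a : Q) (S : Set Q), a * sSup S = ⨆ b ∈ S, a * b
/-- A multiplicative filter of a quantale. -/
def IsMFilter {Q : Type u} [IntegralQuantale Q] (F : Set Q) : Prop :=
  ⊤ ∈ F ∧ (∀ a ∈ F, ∀ b : Q, a ≤ b → b ∈ F) ∧ ∀ a ∈ F, ∀ b ∈ F, a * b ∈ F

/-- `a ≼¹_F b` for the quantale viewed as a module over itself (action = multiplication). -/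
def stepLE {Q : Type u} [IntegralQuantale Q] (F : Set Q) (a b : Q) : Prop :=
  ∃ P : Set (Q × Q), P.Nonempty ∧ (∀ p ∈ P, p.2 ∈ F) ∧
    (a ≤ ⨆ p ∈ P, Prod.fst p) ∧ ∀ p ∈ P, p.2 * p.1 ≤ b

/-- `a ≼ⁿ_F b`: locally less than in `n` steps. -/
def nStepLE {Q : Type u} [IntegralQuantale Q] (F : Set Q) : ℕ → Q → Q → Prop
  | 0, a, b => a = b
  | n + 1, a, b => ∃ c : Q, stepLE F a c ∧ nStepLE F n c b

/-- `a ≼_F b`: locally less than (in some positive number of steps). -/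
def localLE {Q : Type u} [IntegralQuantale Q] (F : Set Q) (a b : Q) : Prop :=
  ∃ n : ℕ, 1 ≤ n ∧ nStepLE F n a b

namespace QAux

variable {Q : Type u} [IntegralQuantale Q]

lemma mul_bot (a : Q) : a * ⊥ = ⊥ := by
  have h := IntegralQuantale.mul_sSup a (∅ : Set Q)
  simpa using h

lemma mul_le_mul_left' (a : Q) {b c : Q} (h : b ≤ c) : a * b ≤ a * c := by
  have h1 : sSup ({b, c} : Set Q) = c := by
    rw [sSup_pair]; exact sup_eq_right.mpr h
  have h2 := IntegralQuantale.mul_sSup a ({b, c} : Set Q)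
  rw [h1] at h2
  rw [h2]
  exact le_biSup (fun x => a * x) (by simp)

lemma mul_le_mul_right' {b c : Q} (h : b ≤ c) (a : Q) : b * a ≤ c * a := by
  rw [mul_comm b a, mul_comm c a]; exact mul_le_mul_left' a h

lemma mul_sup (a b c : Q) : a * (b ⊔ c) = a * b ⊔ a * c := by
  have h := IntegralQuantale.mul_sSup a ({b, c} : Set Q)
  rw [sSup_pair] at h
  exact h.trans iSup_pair

lemma mul_top (a : Q) : a * ⊤ = a := by
  rw [← IntegralQuantale.one_eq_top, mul_one]

lemma top_mul (a : Q) : ⊤ * a = a := by rw [mul_comm, mul_top]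

lemma mul_le_self (a b : Q) : a * b ≤ a :=
  (mul_le_mul_left' a le_top).trans (mul_top a).le

lemma mul_ann (x : Q) : x * sSup {q' : Q | x * q' = ⊥} = ⊥ := by
  rw [IntegralQuantale.mul_sSup]
  exact le_bot_iff.mp (iSup_le fun q => iSup_le fun hq => hq.le)

/-- the dense filter -/
def D (Q : Type u) [IntegralQuantale Q] : Set Q := {q : Q | ∀ z : Q, q * z = ⊥ → z = ⊥}

lemma top_mem_D : (⊤ : Q) ∈ D Q := fun z hz => by rwa [top_mul] at hz

lemma mul_mem_D {s t : Q} (hs : s ∈ D Q) (ht : t ∈ D Q) : s * t ∈ D Q := by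
  intro z hz
  rw [mul_assoc] at hz
  exact ht z (hs _ hz)

lemma s_mem (hred : ∀ a : Q, a * a = ⊥ → a = ⊥) (y : Q) :
    (y ⊔ sSup {q' : Q | y * q' = ⊥}) ∈ D Q := by
  intro z hz
  rw [mul_comm, mul_sup] at hz
  rw [sup_eq_bot_iff] at hz
  obtain ⟨h1, h2⟩ := hz
  have hz' : z ≤ sSup {q' : Q | y * q' = ⊥} := le_sSup (by rwa [Set.mem_setOf_eq, mul_comm])
  have : z * z ≤ ⊥ := (mul_le_mul_left' z hz').trans h2.le
  exact hred z (le_bot_iff.mp this)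

lemma conormal (hred : ∀ a : Q, a * a = ⊥ → a = ⊥) (x y : Q)
    (h : stepLE (D Q) x y) : ∃ s ∈ D Q, s * x ≤ y := by
  obtain ⟨P, hne, hF, hle, hmul⟩ := h
  refine ⟨y ⊔ sSup {q' : Q | y * q' = ⊥}, s_mem hred y, ?_⟩
  rw [mul_comm, mul_sup]
  apply sup_le
  · rw [mul_comm]; exact mul_le_self y x
  · set A := sSup {q' : Q | y * q' = ⊥} with hA
    have hx : x * A ≤ (⨆ p ∈ P, Prod.fst p) * A := mul_le_mul_right' hle A
    have himg : (⨆ p ∈ P, Prod.fst p) = sSup (Prod.fst '' P) := (sSup_image).symm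
    have hsup : A * sSup (Prod.fst '' P) = ⨆ b ∈ Prod.fst '' P, A * b :=
      IntegralQuantale.mul_sSup A _
    have hbot : ∀ b ∈ Prod.fst '' P, A * b = ⊥ := by
      rintro b ⟨p, hp, rfl⟩
      have h1 : p.2 * (p.1 * A) ≤ ⊥ := by
        rw [← mul_assoc]
        calc p.2 * p.1 * A ≤ y * A := mul_le_mul_right' (hmul p hp) A
        _ = ⊥ := mul_ann y
      have h2 : p.1 * A = ⊥ := hF p hp _ (le_bot_iff.mp h1)
      rw [mul_comm]; exact h2
    calc x * A ≤ (⨆ p ∈ P, Prod.fst p) * A := hx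
      _ = A * sSup (Prod.fst '' P) := by rw [himg, mul_comm]
      _ = ⨆ b ∈ Prod.fst '' P, A * b := hsup
      _ ≤ ⊥ := iSup_le fun b => iSup_le fun hb => (hbot b hb).le
      _ ≤ y := bot_le

lemma nstep_single (hred : ∀ a : Q, a * a = ⊥ → a = ⊥) :
    ∀ (n : ℕ) (x y : Q), nStepLE (D Q) n x y → ∃ s ∈ D Q, s * x ≤ y := by
  intro n
  induction n with
  | zero => intro x y h; exact ⟨⊤, top_mem_D, by rw [top_mul]; exact h.le⟩
  | succ n ih =>
    rintro x y ⟨c, hstep, hrest⟩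
    obtain ⟨s, hs, hsx⟩ := conormal hred x c hstep
    obtain ⟨t, ht, hty⟩ := ih c y hrest
    refine ⟨t * s, mul_mem_D ht hs, ?_⟩
    rw [mul_assoc]
    exact (mul_le_mul_left' t hsx).trans hty

lemma single_local {s x y : Q} (hs : s ∈ D Q) (hsx : s * x ≤ y) :
    localLE (D Q) x y := by
  refine ⟨1, le_refl 1, y, ⟨{(x, s)}, ⟨(x, s), rfl⟩, ?_, ?_, ?_⟩, rfl⟩
  · rintro p hp; rw [Set.mem_singleton_iff] at hp; subst hp; exact hs
  · simp
  · rintro p hp; rw [Set.mem_singleton_iff] at hp; subst hp; exact hsx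

lemma ann_le {s x y : Q} (hs : s ∈ D Q) (hsx : s * x ≤ y) :
    sSup {q' : Q | y * q' = ⊥} ≤ sSup {q' : Q | x * q' = ⊥} := by
  apply sSup_le_sSup
  intro q hq
  rw [Set.mem_setOf_eq] at hq ⊢
  have : s * (x * q) ≤ ⊥ := by
    rw [← mul_assoc]
    exact (mul_le_mul_right' hsx q).trans hq.le
  exact hs _ (le_bot_iff.mp this)

end QAux


/-- In a reduced quantale, the dense (codense-at-⊥) filter
`D = {q : ∀ x, q * x = ⊥ → x = ⊥}` is a multiplicative filter, is conormal over `Q`,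
and two elements are identified in the localization at `D` iff their annihilator
suprema `ħ` agree. -/
theorem dense_filter_conormal {Q : Type u} [IntegralQuantale Q]
    (hred : ∀ a : Q, a * a = ⊥ → a = ⊥) :
    IsMFilter {q : Q | ∀ x : Q, q * x = ⊥ → x = ⊥} ∧
    (∀ x y : Q, stepLE {q : Q | ∀ z : Q, q * z = ⊥ → z = ⊥} x y →
      ∃ s ∈ {q : Q | ∀ z : Q, q * z = ⊥ → z = ⊥}, s * x ≤ y) ∧
    (∀ x y : Q,
      (localLE {q : Q | ∀ z : Q, q * z = ⊥ → z = ⊥} x y ∧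
       localLE {q : Q | ∀ z : Q, q * z = ⊥ → z = ⊥} y x) ↔
      sSup {q' : Q | x * q' = ⊥} = sSup {q' : Q | y * q' = ⊥}) := by
  have hDdef : {q : Q | ∀ z : Q, q * z = ⊥ → z = ⊥} = QAux.D Q := rfl
  refine ⟨⟨QAux.top_mem_D, ?_, ?_⟩, ?_, ?_⟩
  · -- upward closed
    intro a ha b hab z hz
    have : a * z ≤ ⊥ := (QAux.mul_le_mul_right' hab z).trans hz.le
    exact ha z (le_bot_iff.mp this)
  · -- mult closed
    intro a ha b hb
    exact QAux.mul_mem_D ha hb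
  · -- conormal
    intro x y h
    exact QAux.conormal hred x y h
  · -- iff
    intro x y
    constructor
    · rintro ⟨⟨n, -, hxy⟩, ⟨m, -, hyx⟩⟩
      obtain ⟨s, hs, hsx⟩ := QAux.nstep_single hred n x y hxy
      obtain ⟨t, ht, hty⟩ := QAux.nstep_single hred m y x hyx
      exact le_antisymm (QAux.ann_le ht hty) (QAux.ann_le hs hsx)
    · intro hann
      constructor
      · apply QAux.single_local (QAux.s_mem hred y)
        rw [mul_comm, QAux.mul_sup]
        apply sup_le
        · rw [mul_comm]; exact QAux.mul_le_self y x
        · rw [← hann, QAux.mul_ann]; exact bot_le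
      · apply QAux.single_local (QAux.s_mem hred x)
        rw [mul_comm, QAux.mul_sup]
        apply sup_le
        · rw [mul_comm]; exact QAux.mul_le_self x y
        · rw [hann, QAux.mul_ann]; exact bot_le
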